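/- Let H : ℝ² → ℝ be C³, and let T⁺ and T⁻ be the triangles with vertices {(0,0),(2ε,0),(ε,√3ε)} and {(0,0),(2ε,0),(ε,-√3ε)} respectively. Then ε⁻² (∫_{T⁺} H dx₂dx₁ - ∫_{T⁻'} H dx₂dx₁), where the second integral is over the reflected region with the same orientation setup, equals ∫_0^{2ε} 3 c(x₁) H₂(x₁,0) dx₁ + O(ε³), where c(x₁) = (x₁/ε)² for x₁ ∈ [0,ε] and c(x₁) = ((2ε - x₁)/ε)² for x₁ ∈ [ε,2ε]. -/

import Mathlib

/-- Partial derivative in the second coordinate direction. -/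
noncomputable def pd2 (f : ℝ × ℝ → ℝ) (p : ℝ × ℝ) : ℝ := fderiv ℝ f p (0, 1)

/-!
For fixed `x₁`, the function `y ↦ H (x₁, y) - H (x₁, -y)` is odd, so its Taylor expansion of
order two at `0` is `2 y H₂(x₁, 0)`, with a remainder `O(y³)` that is uniform for `x₁` in a
compact set. Integrating in `y` up to the height `√3 h` of the triangle (where `h = x₁` or
`h = 2ε - x₁`) gives `3 h² H₂(x₁, 0) + O(h⁴)`; integrating in `x₁` and dividing by `ε²` leaves an
error `O(ε³)`. The substitution `x₁ ↦ 2ε - x₁` maps the right half of the triangle onto the left.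
-/

open Set intervalIntegral

section OneVariable

variable {E : Type*} [NormedAddCommGroup E] [NormedSpace ℝ E]

theorem integral_eq_integral_comp_two_mul_sub (F : ℝ → E) (ε : ℝ) :
    ∫ x in ε..2 * ε, F x = ∫ u in 0..ε, F (2 * ε - u) := by
  rw [integral_comp_sub_left]
  ring_nf

theorem norm_sub_le_of_hasDerivAt_of_norm_le_pow {f f' : ℝ → E} {C y : ℝ} (n : ℕ) (hy : 0 ≤ y)
    (hf : ∀ t, HasDerivAt f (f' t) t) (hbound : ∀ t ∈ Icc 0 y, ‖f' t‖ ≤ C * t ^ n) :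
    ‖f y - f 0‖ ≤ C * y ^ (n + 1) / (n + 1) := by
  have hB : ∀ t, HasDerivAt (fun t => C * t ^ (n + 1) / (n + 1)) (C * t ^ n) t := fun t => by
    refine (((hasDerivAt_pow (n + 1) t).const_mul C).div_const ((n : ℝ) + 1)).congr_deriv ?_
    push_cast
    field_simp
  refine image_norm_le_of_norm_deriv_right_le_deriv_boundary (f := fun t => f t - f 0)
    (fun t _ => ((hf t).sub_const _).continuousAt.continuousWithinAt)
    (fun t _ => ((hf t).sub_const _).hasDerivWithinAt) (by simp) hB
    (fun t ht => hbound t (Ico_subset_Icc_self ht)) ⟨hy, le_rfl⟩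

theorem norm_integral_le_of_norm_le_pow [CompleteSpace E] {f : ℝ → E} {C y : ℝ} (n : ℕ)
    (hy : 0 ≤ y) (hf : Continuous f) (hbound : ∀ t ∈ Icc 0 y, ‖f t‖ ≤ C * t ^ n) :
    ‖∫ t in 0..y, f t‖ ≤ C * y ^ (n + 1) / (n + 1) := by
  simpa using norm_sub_le_of_hasDerivAt_of_norm_le_pow n hy
    (fun t => (hf.integral_hasStrictDerivAt 0 t).hasDerivAt) hbound

theorem norm_sub_taylor_two_le {ψ ψ₁ ψ₂ ψ₃ : ℝ → E} {D y : ℝ} (hy : 0 ≤ y)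
    (h₁ : ∀ t, HasDerivAt ψ (ψ₁ t) t) (h₂ : ∀ t, HasDerivAt ψ₁ (ψ₂ t) t)
    (h₃ : ∀ t, HasDerivAt ψ₂ (ψ₃ t) t) (hD : ∀ t ∈ Icc 0 y, ‖ψ₃ t‖ ≤ D) :
    ‖ψ y - ψ 0 - y • ψ₁ 0 - (y ^ 2 / 2) • ψ₂ 0‖ ≤ D * y ^ 3 / 6 := by
  have hsub : ∀ t ∈ Icc 0 y, Icc 0 t ⊆ Icc 0 y := fun t ht => Icc_subset_Icc_right ht.2
  have e₂ : ∀ t ∈ Icc 0 y, ‖ψ₂ t - ψ₂ 0‖ ≤ D * t := fun t ht => by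
    simpa using norm_sub_le_of_hasDerivAt_of_norm_le_pow 0 ht.1 h₃
      (fun s hs => by simpa using hD s (hsub t ht hs))
  have e₁ : ∀ t ∈ Icc 0 y, ‖ψ₁ t - ψ₁ 0 - t • ψ₂ 0‖ ≤ D / 2 * t ^ 2 := fun t ht => by
    have := norm_sub_le_of_hasDerivAt_of_norm_le_pow 1 ht.1 (f := fun s => ψ₁ s - s • ψ₂ 0)
      (fun s => (h₂ s).sub ((hasDerivAt_id s).smul_const (ψ₂ 0)))
      (fun s hs => by simpa using e₂ s (hsub t ht hs))
    convert this using 1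
    · simp only [zero_smul, sub_zero, sub_right_comm]
    · ring
  have := norm_sub_le_of_hasDerivAt_of_norm_le_pow 2 hy
    (f := fun s => ψ s - s • ψ₁ 0 - (s ^ 2 / 2) • ψ₂ 0)
    (fun s => ((h₁ s).sub ((hasDerivAt_id s).smul_const (ψ₁ 0))).sub
      ((((hasDerivAt_pow 2 s).div_const 2).smul_const (ψ₂ 0)).congr_deriv
        (by norm_num : ((2 : ℕ) * s ^ (2 - 1) / 2) • ψ₂ 0 = s • ψ₂ 0)))
    (fun s hs => by simpa using e₁ s hs)
  convert this using 1
  · simp only [zero_smul, sub_zero, zero_pow two_ne_zero, zero_div]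
    congr 1
    abel
  · ring

end OneVariable

section Vertical

variable {f : ℝ × ℝ → ℝ}

theorem ContDiff.pd2 {m n : WithTop ℕ∞} (hf : ContDiff ℝ n f) (hmn : m + 1 ≤ n) :
    ContDiff ℝ m (pd2 f) :=
  (hf.fderiv_right hmn).clm_apply contDiff_const

theorem hasDerivAt_slice (hf : Differentiable ℝ f) (x t : ℝ) :
    HasDerivAt (fun y => f (x, y)) (pd2 f (x, t)) t :=
  (hf (x, t)).hasFDerivAt.comp_hasDerivAt t ((hasDerivAt_const t x).prodMk (hasDerivAt_id t))

theorem hasDerivAt_slice_neg (hf : Differentiable ℝ f) (x t : ℝ) :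
    HasDerivAt (fun y => f (x, -y)) (-pd2 f (x, -t)) t :=
  ((hasDerivAt_slice hf x (-t)).comp t (hasDerivAt_neg t)).congr_deriv (by ring)

theorem hasDerivAt_slice_sub_slice_neg (hf : Differentiable ℝ f) (x t : ℝ) :
    HasDerivAt (fun y => f (x, y) - f (x, -y)) (pd2 f (x, t) + pd2 f (x, -t)) t :=
  ((hasDerivAt_slice hf x t).sub (hasDerivAt_slice_neg hf x t)).congr_deriv (by ring)

theorem hasDerivAt_slice_add_slice_neg (hf : Differentiable ℝ f) (x t : ℝ) :
    HasDerivAt (fun y => f (x, y) + f (x, -y)) (pd2 f (x, t) - pd2 f (x, -t)) t :=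
  ((hasDerivAt_slice hf x t).add (hasDerivAt_slice_neg hf x t)).congr_deriv (by ring)

theorem exists_abs_slice_sub_slice_neg_sub_le (hf : ContDiff ℝ 3 f) (R : ℝ) :
    ∃ K, ∀ x y, |x| ≤ R → 0 ≤ y → y ≤ R →
      |f (x, y) - f (x, -y) - 2 * y * pd2 f (x, 0)| ≤ K * y ^ 3 := by
  have hf₁ : ContDiff ℝ 2 (pd2 f) := hf.pd2 (by norm_num)
  have hf₂ : ContDiff ℝ 1 (pd2 (pd2 f)) := hf₁.pd2 (by norm_num)
  have hf₃ : Continuous (pd2 (pd2 (pd2 f))) := (hf₂.pd2 (m := 0) le_rfl).continuous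
  obtain ⟨M, hM⟩ := (isCompact_closedBall (0 : ℝ × ℝ) R).exists_bound_of_continuousOn
    hf₃.continuousOn
  refine ⟨M / 3, fun x y hx hy hyR => ?_⟩
  have hball : ∀ t ∈ Icc 0 y, |pd2 (pd2 (pd2 f)) (x, t)| ≤ M ∧ |pd2 (pd2 (pd2 f)) (x, -t)| ≤ M :=
    fun t ht => ⟨hM _ (by simp [Prod.norm_def, abs_of_nonneg ht.1, hx, ht.2.trans hyR]),
      hM _ (by simp [Prod.norm_def, abs_of_nonneg ht.1, hx, ht.2.trans hyR])⟩
  have := norm_sub_taylor_two_le (D := 2 * M) hy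
    (hasDerivAt_slice_sub_slice_neg (hf.differentiable (by norm_num)) x)
    (hasDerivAt_slice_add_slice_neg (hf₁.differentiable (by norm_num)) x)
    (hasDerivAt_slice_sub_slice_neg (hf₂.differentiable (by norm_num)) x)
    (fun t ht => (abs_add_le _ _).trans (by linarith [hball t ht]))
  simp only [neg_zero, sub_self, smul_eq_mul, Real.norm_eq_abs] at this
  convert this using 2 <;> ring

end Vertical

theorem abs_integral_sub_sq_mul_le {φ : ℝ → ℝ} (hφ : Continuous φ) {c K s : ℝ} (hs : 0 ≤ s)
    (h : ∀ y ∈ Icc 0 s, |φ y - 2 * y * c| ≤ K * y ^ 3) :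
    |(∫ y in 0..s, φ y) - s ^ 2 * c| ≤ K * s ^ 4 / 4 := by
  have hlin : ∫ y in 0..s, 2 * y * c = s ^ 2 * c := by
    rw [integral_mul_const, integral_const_mul, integral_id]
    ring
  have hlinc : Continuous fun y => 2 * y * c := by fun_prop
  rw [← hlin, ← integral_sub (hφ.intervalIntegrable 0 s) (hlinc.intervalIntegrable 0 s)]
  refine (norm_integral_le_of_norm_le_pow 3 hs (hφ.sub hlinc) h).trans_eq ?_
  norm_num

-- `ξ u` is the abscissa of the vertical segment of height `√3 u`; `ξ = id` and `ξ = (2ε - ·)`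
-- give the two halves of the triangle.
theorem abs_half_triangle_integral_sub_le {f : ℝ × ℝ → ℝ} (hf : Continuous f)
    (hf₁ : Continuous (pd2 f)) {ξ : ℝ → ℝ} (hξ : Continuous ξ) {K ε : ℝ} (hε : 0 < ε)
    (hK : ∀ u ∈ Icc 0 ε, ∀ y ∈ Icc 0 (√3 * u),
      |f (ξ u, y) - f (ξ u, -y) - 2 * y * pd2 f (ξ u, 0)| ≤ K * y ^ 3) :
    |1 / ε ^ 2 * (∫ u in 0..ε, ∫ y in 0..√3 * u, (f (ξ u, y) - f (ξ u, -y)))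
      - ∫ u in 0..ε, 3 * (u / ε) ^ 2 * pd2 f (ξ u, 0)| ≤ 9 * K / 20 * ε ^ 3 := by
  set I : ℝ → ℝ := fun u => ∫ y in 0..√3 * u, (f (ξ u, y) - f (ξ u, -y))
  have hI : Continuous I :=
    continuous_parametric_intervalIntegral_of_continuous (by fun_prop) (by fun_prop)
  have hG : Continuous fun u => 3 * u ^ 2 * pd2 f (ξ u, 0) := by fun_prop
  have hrow : ∀ u ∈ Icc 0 ε, |I u - 3 * u ^ 2 * pd2 f (ξ u, 0)| ≤ 9 * K / 4 * u ^ 4 := by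
    intro u hu
    have hsq : (√3 * u) ^ 2 = 3 * u ^ 2 := by rw [mul_pow, Real.sq_sqrt (by norm_num)]
    have := abs_integral_sub_sq_mul_le (by fun_prop) (mul_nonneg (Real.sqrt_nonneg 3) hu.1)
      (hK u hu)
    rw [hsq, show (√3 * u) ^ 4 = (3 * u ^ 2) ^ 2 by rw [← hsq]; ring] at this
    linarith
  have hweight : ∫ u in 0..ε, 3 * (u / ε) ^ 2 * pd2 f (ξ u, 0)
      = 1 / ε ^ 2 * ∫ u in 0..ε, 3 * u ^ 2 * pd2 f (ξ u, 0) := by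
    rw [← integral_const_mul]
    congr 1 with u
    field_simp
  rw [hweight, ← mul_sub, ← integral_sub (hI.intervalIntegrable 0 ε) (hG.intervalIntegrable 0 ε),
    abs_mul, abs_of_pos (by positivity)]
  have := norm_integral_le_of_norm_le_pow 4 hε.le (hI.sub hG) hrow
  calc 1 / ε ^ 2 * |∫ u in 0..ε, (I u - 3 * u ^ 2 * pd2 f (ξ u, 0))|
      ≤ 1 / ε ^ 2 * (9 * K / 4 * ε ^ 5 / (4 + 1)) := by gcongr; simpa using this
    _ = 9 * K / 20 * ε ^ 3 := by field_simp; ring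

theorem integral_tent_mul {g : ℝ → ℝ} (hg : Continuous g) {ε : ℝ} (hε : 0 < ε) :
    ∫ x in 0..2 * ε, 3 * (if x ≤ ε then (x / ε) ^ 2 else ((2 * ε - x) / ε) ^ 2) * g x
      = (∫ u in 0..ε, 3 * (u / ε) ^ 2 * g u) + ∫ u in 0..ε, 3 * (u / ε) ^ 2 * g (2 * ε - u) := by
  have hleft : EqOn (fun x => 3 * (if x ≤ ε then (x / ε) ^ 2 else ((2 * ε - x) / ε) ^ 2) * g x)
      (fun x => 3 * (x / ε) ^ 2 * g x) (uIcc 0 ε) := fun x hx => by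
    rw [uIcc_of_le hε.le] at hx
    simp only [if_pos hx.2]
  have hright : EqOn (fun x => 3 * (if x ≤ ε then (x / ε) ^ 2 else ((2 * ε - x) / ε) ^ 2) * g x)
      (fun x => 3 * ((2 * ε - x) / ε) ^ 2 * g x) (uIcc ε (2 * ε)) := fun x hx => by
    rw [uIcc_of_le (by linarith)] at hx
    rcases hx.1.eq_or_lt with rfl | hlt
    · simp only [le_refl, if_true]; ring_nf
    · simp only [if_neg hlt.not_ge]
  rw [← integral_add_adjacent_intervals
      (((by fun_prop : Continuous fun x => 3 * (x / ε) ^ 2 * g x).continuousOn.congr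
        hleft).intervalIntegrable)
      (((by fun_prop : Continuous fun x => 3 * ((2 * ε - x) / ε) ^ 2 * g x).continuousOn.congr
        hright).intervalIntegrable),
    integral_congr hleft, integral_congr hright, integral_eq_integral_comp_two_mul_sub]
  simp only [sub_sub_cancel]

theorem symmetric_triangle_difference
    (H : ℝ × ℝ → ℝ) (hH : ContDiff ℝ 3 H) :
    ∃ C : ℝ, ∀ ε : ℝ, 0 < ε → ε ≤ 1 →
      |(1 / ε ^ 2) *
            ((∫ x in (0 : ℝ)..ε, ∫ y in (0 : ℝ)..(Real.sqrt 3 * x),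
                (H (x, y) - H (x, -y)))
              + ∫ x in ε..(2 * ε), ∫ y in (0 : ℝ)..(Real.sqrt 3 * (2 * ε - x)),
                (H (x, y) - H (x, -y)))
          - ∫ x in (0 : ℝ)..(2 * ε),
              3 * (if x ≤ ε then (x / ε) ^ 2 else ((2 * ε - x) / ε) ^ 2) * pd2 H (x, 0)|
        ≤ C * ε ^ 3 := by
  obtain ⟨K, hK⟩ := exists_abs_slice_sub_slice_neg_sub_le hH 2
  have hH₁ : Continuous (pd2 H) := (hH.pd2 (m := 2) (by norm_num)).continuous
  refine ⟨9 * K / 10, fun ε hε hε₁ => ?_⟩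
  have hrow : ∀ ξ : ℝ → ℝ, (∀ u ∈ Icc 0 ε, |ξ u| ≤ 2) → ∀ u ∈ Icc 0 ε, ∀ y ∈ Icc 0 (√3 * u),
      |H (ξ u, y) - H (ξ u, -y) - 2 * y * pd2 H (ξ u, 0)| ≤ K * y ^ 3 := by
    intro ξ hξ u hu y hy
    have hsqrt : √3 ≤ 2 := Real.sqrt_le_iff.mpr ⟨by norm_num, by norm_num⟩
    exact hK _ _ (hξ u hu) hy.1 (by nlinarith [hy.2, hu.1, hu.2, Real.sqrt_nonneg 3])
  have hleft := abs_half_triangle_integral_sub_le hH.continuous hH₁ continuous_id hε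
    (hrow id fun u hu => by rw [id, abs_of_nonneg hu.1]; linarith [hu.2])
  have hright := abs_half_triangle_integral_sub_le hH.continuous hH₁ (continuous_sub_left (2 * ε))
    hε
    (hrow (2 * ε - ·) fun u hu => by rw [abs_of_nonneg (by linarith [hu.2])]; linarith [hu.1])
  rw [integral_tent_mul (g := fun x => pd2 H (x, 0)) (by fun_prop) hε,
    integral_eq_integral_comp_two_mul_sub]
  simp only [sub_sub_cancel, id] at hleft hright ⊢
  calc _ = |(1 / ε ^ 2 * (∫ u in 0..ε, ∫ y in 0..√3 * u, (H (u, y) - H (u, -y)))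
        - ∫ u in 0..ε, 3 * (u / ε) ^ 2 * pd2 H (u, 0))
        + (1 / ε ^ 2 * (∫ u in 0..ε, ∫ y in 0..√3 * u, (H (2 * ε - u, y) - H (2 * ε - u, -y)))
        - ∫ u in 0..ε, 3 * (u / ε) ^ 2 * pd2 H (2 * ε - u, 0))| := by congr 1; ring
    _ ≤ 9 * K / 10 * ε ^ 3 := (abs_add_le _ _).trans (by linarith)
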